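/- arXiv:2303.04367 — 2 statements merged into one kernel-verified Lean document; each statement's English description precedes it below -/
import Mathlib

section
/- Let ⟨a,b⟩ be an unlocked parabolic affine ℤ²-action on T^d with a = A+α step-2 and b = B+β of step S. For every non-resonant vector m ∈ C₃, writing s = s(m) for the step of m, there exists an integer t = t(m,A,B) with 1 ≤ t ≤ s−1 such that ÂB̂^j m ≠ 0 for 0 ≤ j ≤ t−1, ÂB̂^j m = 0 for j ≥ t, and for all k, l ∈ ℤ: Ā^k B̄^l m = m + kÂm + Σ_{j=1}^{t−1} C(l,j) B̂^j (m + kÂm) + Σ_{j=t}^{s−1} C(l,j) B̂^j m, where C(l,j) = l(l−1)···(l−j+1)/j! is the (generalized) binomial coefficient, a polynomial in l of degree j with leading behavior l^j/j!. -/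
open MeasureTheory
open scoped Matrix

namespace ParabolicKAM

/-- Points of `ℝ^d` (lifts of points of the torus `𝕋^d`). -/
abbrev Vec (d : ℕ) := Fin d → ℝ

/-- Integer vectors (Fourier frequencies). -/
abbrev IVec (d : ℕ) := Fin d → ℤ

/-- Square integer matrices. -/
abbrev Mat (d : ℕ) := Matrix (Fin d) (Fin d) ℤ

/-- The `d`-dimensional torus. -/
abbrev Td (d : ℕ) := Fin d → AddCircle (1 : ℝ)

instance : Fact ((0 : ℝ) < 1) := ⟨one_pos⟩

/-- The real matrix with the same entries as an integer matrix. -/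
def rmat {d₁ d₂ : ℕ} (A : Matrix (Fin d₁) (Fin d₂) ℤ) : Matrix (Fin d₁) (Fin d₂) ℝ :=
  A.map fun a => (a : ℝ)

/-- The affine map `x ↦ A x + α` on `ℝ^d` (a lift of the affine torus map). -/
def affR {d : ℕ} (A : Mat d) (α : Vec d) : Vec d → Vec d :=
  fun x => (rmat A).mulVec x + α

/-- `A` is parabolic (unipotent). -/
def IsParabolic {d : ℕ} (A : Mat d) : Prop := ∃ S : ℕ, (A - 1) ^ S = 0

/-- `A` is parabolic of step exactly `S`. -/
def IsStepParabolic {d : ℕ} (A : Mat d) (S : ℕ) : Prop :=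
  (A - 1) ^ S = 0 ∧ (A - 1) ^ (S - 1) ≠ 0

/-- `A` is step-2 parabolic. -/
def IsStep2 {d : ℕ} (A : Mat d) : Prop := (A - 1) ^ 2 = 0 ∧ A ≠ 1

/-- `(α, β)` is an admissible pair of translation parts: `(A - Id) β = (B - Id) α`. -/
def TAB {d : ℕ} (A B : Mat d) (α β : Vec d) : Prop :=
  (rmat (A - 1)).mulVec β = (rmat (B - 1)).mulVec α

/-- The dual matrix `Ā = (Aᵀ)⁻¹` (acting on frequencies). -/
noncomputable def dual {d : ℕ} (A : Mat d) : Mat d := A.transpose⁻¹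

/-- `Â = Ā - Id`. -/
noncomputable def hat {d : ℕ} (A : Mat d) : Mat d := dual A - 1

/-- Integer powers of a matrix. -/
noncomputable def zpowM {d : ℕ} (A : Mat d) : ℤ → Mat d
  | Int.ofNat n => A ^ n
  | Int.negSucc n => (A ^ (n + 1))⁻¹

/-- Euclidean norm of an integer vector. -/
noncomputable def inorm {d : ℕ} (m : IVec d) : ℝ :=
  Real.sqrt (∑ i, ((m i : ℝ)) ^ 2)

/-- Euclidean norm of a real vector. -/
noncomputable def rnorm {d : ℕ} (v : Vec d) : ℝ :=
  Real.sqrt (∑ i, (v i) ^ 2)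

/-- Standard inner product of integer vectors. -/
def iprod {d : ℕ} (m n : IVec d) : ℤ := ∑ i, m i * n i

/-- Euclidean operator norm of (the real matrix of) an integer matrix. -/
noncomputable def eopNorm {d : ℕ} (M : Mat d) : ℝ :=
  ‖LinearMap.toContinuousLinearMap (Matrix.toEuclideanLin (rmat M))‖

/-- `m` is a resonant vector for the dual action of `⟨A, B⟩`. -/
def Resonant {d : ℕ} (A B : Mat d) (m : IVec d) : Prop :=
  m ≠ 0 ∧
    (∃ k l : ℤ, ¬(k = 0 ∧ l = 0) ∧ (zpowM (dual A) k * zpowM (dual B) l).mulVec m = m) ∧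
    ((dual A).mulVec m ≠ m ∨ (dual B).mulVec m ≠ m)

/-- The normalization `k ∧ l = 1` for resonance pairs. -/
def NormalizedPair (k l : ℤ) : Prop :=
  (k = 1 ∧ l = 0) ∨ (k = 0 ∧ l = 1) ∨ (Int.gcd k l = 1 ∧ 0 < k)

/-- `(k, l)` is the resonance pair associated to the resonant vector `m`. -/
def IsResPair {d : ℕ} (A B : Mat d) (m : IVec d) (k l : ℤ) : Prop :=
  NormalizedPair k l ∧ k • (hat A).mulVec m + l • (hat B).mulVec m = 0

/-- `m ∈ 𝒞₁`: degenerate frequencies, fixed by the whole dual action. -/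
def InC1 {d : ℕ} (A B : Mat d) (m : IVec d) : Prop :=
  m ≠ 0 ∧ (dual A).mulVec m = m ∧ (dual B).mulVec m = m

/-- `m ∈ 𝒞₃`: nonzero, non-degenerate, non-resonant frequencies. -/
def InC3 {d : ℕ} (A B : Mat d) (m : IVec d) : Prop :=
  m ≠ 0 ∧ ¬InC1 A B m ∧ ¬Resonant A B m

/-- `s` is the step of the frequency `m`: the least `s` with `B̂^s m = 0`. -/
def stepOf {d : ℕ} (B : Mat d) (m : IVec d) (s : ℕ) : Prop :=
  ((hat B) ^ s).mulVec m = 0 ∧ ∀ t : ℕ, ((hat B) ^ t).mulVec m = 0 → s ≤ t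

/-- `m` is a lowest point on its `Ā`-orbit (for step-2 `A`, `Ā^k m = m + k Â m`). -/
def LowestOnOrbit {d : ℕ} (A : Mat d) (m : IVec d) : Prop :=
  ∀ k : ℤ, inorm m ≤ inorm (m + k • (hat A).mulVec m)

/-- The affine map of the torus with integer linear part `M` and translation `γ`. -/
noncomputable def affT {n : ℕ} (M : Mat n) (γ : Td n) : Td n → Td n :=
  fun x i => (∑ j, M i j • x j) + γ i

/-- The projection of tori induced by an integer matrix `P`. -/
noncomputable def projT {n d : ℕ} (P : Matrix (Fin n) (Fin d) ℤ) : Td d → Td n :=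
  fun x i => ∑ j, P i j • x j

/-- The point of the torus below `α ∈ ℝ^d`. -/
noncomputable def toT {d : ℕ} (α : Vec d) : Td d := fun i => (α i : AddCircle (1 : ℝ))

/-- A self-map of the torus is affine if it has the form `x ↦ M x + γ`, `M` integer. -/
def IsAffT {n : ℕ} (f : Td n → Td n) : Prop := ∃ (M : Mat n) (γ : Td n), f = affT M γ

/-- A rank-one factor of the affine `ℤ²`-action generated by `A + α` and `B + β`: a factor
action on a quotient torus, induced by a surjective integer-linear projection intertwining
the action, whose image is contained in the group generated by a single affine map. -/
structure RankOneFactorData (d : ℕ) (A B : Mat d) (α β : Vec d) : Type where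
  n : ℕ
  npos : 0 < n
  P : Matrix (Fin n) (Fin d) ℤ
  surj : Function.Surjective fun m : Fin d → ℤ => P.mulVec m
  A' : Mat n
  B' : Mat n
  α' : Td n
  β' : Td n
  intertwineA : projT P ∘ affT A (toT α) = affT A' α' ∘ projT P
  intertwineB : projT P ∘ affT B (toT β) = affT B' β' ∘ projT P
  rankOne : ∃ c : Equiv.Perm (Td n), IsAffT (⇑c) ∧
      (∃ u : Equiv.Perm (Td n), u ∈ Subgroup.zpowers c ∧ ⇑u = affT A' α') ∧
      (∃ v : Equiv.Perm (Td n), v ∈ Subgroup.zpowers c ∧ ⇑v = affT B' β')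

/-- The rank-one factor is the identity: both generators project to the identity. -/
def RankOneFactorData.IsIdentity {d : ℕ} {A B : Mat d} {α β : Vec d}
    (F : RankOneFactorData d A B α β) : Prop :=
  affT F.A' F.α' = id ∧ affT F.B' F.β' = id

/-- The rank-one factor is genuinely parabolic: some generator projects to an affine map
with non-identity unipotent linear part. -/
def RankOneFactorData.IsGenuinelyParabolic {d : ℕ} {A B : Mat d} {α β : Vec d}
    (F : RankOneFactorData d A B α β) : Prop :=
  (IsParabolic F.A' ∧ F.A' ≠ 1) ∨ (IsParabolic F.B' ∧ F.B' ≠ 1)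

/-- The linear action `⟨A, B⟩` is locked: every admissible affine action above it has a
rank-one factor that is the identity or genuinely parabolic. -/
def IsLocked {d : ℕ} (A B : Mat d) : Prop :=
  ∀ α β : Vec d, TAB A B α β →
    ∃ F : RankOneFactorData d A B α β, F.IsIdentity ∨ F.IsGenuinelyParabolic

/-- `f : ℝ^d → ℝ^d` is `ℤ^d`-periodic. -/
def ZPeriodic {d : ℕ} (f : Vec d → Vec d) : Prop :=
  ∀ (x : Vec d) (v : IVec d), f (x + fun i => (v i : ℝ)) = f x

/-- The `C^r` norm of a map `ℝ^d → ℝ^d`. -/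
noncomputable def crNorm {d : ℕ} (r : ℕ) (f : Vec d → Vec d) : ℝ :=
  ⨆ i : Fin (r + 1), ⨆ x : Vec d, ‖iteratedFDeriv ℝ (i : ℕ) f x‖

/-- `f` has zero average over the fundamental domain. -/
def ZeroAvg {d : ℕ} (f : Vec d → Vec d) : Prop :=
  ∫ x in Set.Icc (0 : Vec d) 1, f x = 0

/-- KAM-rigidity, under volume preserving perturbations, of the affine `ℤ²`-action
generated by `a = A + α` and `b = B + β` (expressed on `ℤ^d`-periodic lifts to `ℝ^d`). -/
def KAMRigid {d : ℕ} (A B : Mat d) (α β : Vec d) : Prop :=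
  ∃ σ r₀ : ℕ, σ ≤ r₀ ∧ ∃ ε : ℝ, 0 < ε ∧ ∃ C : ℝ, 0 < C ∧
    ∀ r : ℕ, r₀ ≤ r → ∀ f g : Vec d → Vec d,
      ContDiff ℝ (⊤ : ℕ∞) f → ContDiff ℝ (⊤ : ℕ∞) g → ZPeriodic f → ZPeriodic g →
      (fun x => affR A α x + f x) ∘ (fun x => affR B β x + g x) =
        (fun x => affR B β x + g x) ∘ (fun x => affR A α x + f x) →
      MeasurePreserving (fun x => affR A α x + f x) volume volume →
      MeasurePreserving (fun x => affR B β x + g x) volume volume →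
      crNorm r f ≤ ε → crNorm r g ≤ ε → ZeroAvg f → ZeroAvg g →
      ∃ h : Vec d → Vec d, ContDiff ℝ (⊤ : ℕ∞) h ∧ ZPeriodic h ∧
        crNorm (r - σ) h ≤ C * ε ∧
        Function.Bijective (fun x : Vec d => x + h x) ∧
        MeasurePreserving (fun x : Vec d => x + h x) volume volume ∧
        (fun x : Vec d => x + h x) ∘ (fun x => affR A α x + f x) =
          affR A α ∘ (fun x : Vec d => x + h x) ∧
        (fun x : Vec d => x + h x) ∘ (fun x => affR B β x + g x) =
          affR B β ∘ (fun x : Vec d => x + h x)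

/-- Ergodicity of the affine `ℤ²`-action with respect to Haar measure on the torus. -/
def JointlyErgodic {d : ℕ} (A B : Mat d) (α β : Vec d) : Prop :=
  ∀ s : Set (Td d), MeasurableSet s →
    affT A (toT α) ⁻¹' s = s → affT B (toT β) ⁻¹' s = s →
    volume s = 0 ∨ volume sᶜ = 0

/-- The linear map whose kernel is the space `𝒯(A,B)` of admissible translation parts. -/
noncomputable def TABmap {d : ℕ} (A B : Mat d) : (Vec d × Vec d) →ₗ[ℝ] Vec d :=
  ((rmat (A - 1)).mulVecLin.comp (LinearMap.snd ℝ (Vec d) (Vec d))) -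
    ((rmat (B - 1)).mulVecLin.comp (LinearMap.fst ℝ (Vec d) (Vec d)))

/-- The space `𝒯(A,B)` of admissible translation parts, as a subspace of `ℝ^d × ℝ^d`. -/
noncomputable def TABsub {d : ℕ} (A B : Mat d) : Submodule ℝ (Vec d × Vec d) :=
  LinearMap.ker (TABmap A B)

/-- `e(m, x) = e^{2π i ⟨m, x⟩}`. -/
noncomputable def eF {d : ℕ} (m : IVec d) (x : Vec d) : ℂ :=
  Complex.exp (2 * (Real.pi : ℂ) * Complex.I * ∑ i, (m i : ℂ) * (x i : ℂ))

/-- `c : ℤ → ℤ → ℝ^d` is the family of translation parts `α_{k,l} = a^k b^l - A^k B^l`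
of the elements of the affine action generated by `a = A + α` and `b = B + β`. -/
def IsTransFamily {d : ℕ} (A B : Mat d) (α β : Vec d) (c : ℤ → ℤ → Vec d) : Prop :=
  c 0 0 = 0 ∧ (∀ k l : ℤ, c (k + 1) l = α + (rmat A).mulVec (c k l)) ∧
    ∀ k l : ℤ, c k (l + 1) = β + (rmat B).mulVec (c k l)

/-- The maximal translation factor of the action is `(γ,τ)`-simultaneously Diophantine. -/
def DiophTransFactor {d : ℕ} (γ τ : ℝ) (A B : Mat d) (α β : Vec d) : Prop :=
  ∀ m : IVec d, m ≠ 0 → (dual A).mulVec m = m → (dual B).mulVec m = m →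
    γ / inorm m ^ τ < max ‖1 - eF m α‖ ‖1 - eF m β‖

/-- Every resonance of the action is `(γ,τ)`-Diophantine. -/
def DiophResonances {d : ℕ} (γ τ : ℝ) (A B : Mat d) (α β : Vec d) : Prop :=
  ∀ (m : IVec d) (k l : ℤ), Resonant A B m → IsResPair A B m k l →
    ∀ c : ℤ → ℤ → Vec d, IsTransFamily A B α β c →
      γ / inorm m ^ τ < ‖1 - eF m (c k l)‖

/-- The affine action generated by `A + α`, `B + β` is `(γ,τ)`-Diophantine. -/
def DiophAction {d : ℕ} (γ τ : ℝ) (A B : Mat d) (α β : Vec d) : Prop :=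
  DiophTransFactor γ τ A B α β ∧ DiophResonances γ τ A B α β

/-- The linearized coboundary operator `D h = h ∘ a - A h` above `a = A + α`. -/
def Dop {d : ℕ} (A : Mat d) (α : Vec d) (h : Vec d → Vec d) : Vec d → Vec d :=
  fun x => h (affR A α x) - (rmat A).mulVec (h x)

/-- Generalized binomial coefficient `C(l, j) = l (l-1) ⋯ (l-j+1) / j!`
(a polynomial in `l` of degree `j`; the division is exact). -/
def zchoose (l : ℤ) (j : ℕ) : ℤ :=
  (∏ i ∈ Finset.range j, (l - (i : ℤ))) / (j.factorial : ℤ)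



/-! ### Auxiliary lemmas -/

section ZChooseLemmas
open Finset

lemma prod_eq_nat' (n j : ℕ) :
    (∏ i ∈ range j, ((n : ℤ) - (i : ℤ))) = (n.descFactorial j : ℤ) := by
  rcases le_or_gt j n with h | h
  · rw [Nat.descFactorial_eq_prod_range, Nat.cast_prod]
    refine Finset.prod_congr rfl fun i hi => ?_
    rw [Finset.mem_range] at hi
    rw [Nat.cast_sub (le_of_lt (lt_of_lt_of_le hi h))]
  · rw [Nat.descFactorial_eq_zero_iff_lt.2 h, Nat.cast_zero]
    apply Finset.prod_eq_zero (Finset.mem_range.2 h)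
    simp

lemma prod_asc' (n j : ℕ) : (∏ x ∈ range j, ((n:ℤ) + 1 + (x:ℤ))) = ((n+1).ascFactorial j : ℤ) := by
  induction j with
  | zero => simp
  | succ k ih =>
    rw [Finset.prod_range_succ, ih, Nat.ascFactorial_succ]
    push_cast; ring

lemma prod_eq_neg' (n j : ℕ) :
    (∏ i ∈ range j, ((Int.negSucc n) - (i : ℤ))) = (-1)^j * ((n+1).ascFactorial j : ℤ) := by
  have h1 : ∀ i ∈ range j, (Int.negSucc n) - (i:ℤ) = (-1) * ((n:ℤ) + 1 + i) := by
    intro i _; rw [Int.negSucc_eq]; push_cast; ring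
  rw [Finset.prod_congr rfl h1, Finset.prod_mul_distrib, Finset.prod_const, Finset.card_range]
  congr 1
  exact prod_asc' n j

lemma factorial_dvd_prod (l : ℤ) (j : ℕ) :
    ((j.factorial : ℤ)) ∣ ∏ i ∈ range j, (l - (i : ℤ)) := by
  cases l with
  | ofNat n =>
    rw [Int.ofNat_eq_coe, prod_eq_nat']
    exact_mod_cast Int.natCast_dvd_natCast.2 (Nat.factorial_dvd_descFactorial n j)
  | negSucc n =>
    rw [prod_eq_neg']
    exact Dvd.dvd.mul_left (Int.natCast_dvd_natCast.2 (Nat.factorial_dvd_ascFactorial (n+1) j)) _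

lemma zchoose_spec (l : ℤ) (j : ℕ) :
    zchoose l j * (j.factorial : ℤ) = ∏ i ∈ range j, (l - (i : ℤ)) := by
  unfold zchoose
  exact Int.ediv_mul_cancel (factorial_dvd_prod l j)

lemma zchoose_eq_of (l : ℤ) (j : ℕ) (c : ℤ)
    (h : (∏ i ∈ range j, (l - (i : ℤ))) = c * j.factorial) : zchoose l j = c := by
  have h2 := zchoose_spec l j
  rw [h] at h2
  exact mul_right_cancel₀ (by exact_mod_cast j.factorial_ne_zero) h2

lemma zchoose_zero_right (l : ℤ) : zchoose l 0 = 1 :=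
  zchoose_eq_of l 0 1 (by simp)

lemma zchoose_zero_of_pos (j : ℕ) (hj : 0 < j) : zchoose 0 j = 0 :=
  zchoose_eq_of 0 j 0 (by
    rw [zero_mul]
    exact Finset.prod_eq_zero (Finset.mem_range.2 hj) (by simp))

lemma zchoose_pascal (l : ℤ) (j : ℕ) :
    zchoose (l+1) (j+1) = zchoose l (j+1) + zchoose l j := by
  apply zchoose_eq_of
  have h1 : (∏ i ∈ range (j+1), (l + 1 - (i : ℤ))) = (∏ i ∈ range j, (l - (i:ℤ))) * (l+1) := by
    rw [Finset.prod_range_succ']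
    have h0 : (l + 1 - ((0:ℕ):ℤ)) = l + 1 := by push_cast; ring
    rw [h0]
    congr 1
    refine Finset.prod_congr rfl fun i hi => ?_
    push_cast; ring
  have h2 : (∏ i ∈ range (j+1), (l - (i : ℤ))) = (∏ i ∈ range j, (l - (i:ℤ))) * (l - j) :=
    Finset.prod_range_succ _ _
  have hF : (((j+1).factorial : ℕ) : ℤ) = ((j:ℤ)+1) * (j.factorial : ℤ) := by
    rw [Nat.factorial_succ]; push_cast; ring
  have s1 := zchoose_spec l (j+1)
  have s2 := zchoose_spec l j
  rw [h2, hF] at s1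
  rw [h1, hF]
  linear_combination - s1 - ((j:ℤ)+1) * s2

end ZChooseLemmas

section MatrixLemmas
open Finset
variable {d : ℕ}

lemma transpose_unip {S : ℕ} {B : Mat d} (h : (B - 1)^S = 0) : (B.transpose - 1)^S = 0 := by
  have h2 := congrArg Matrix.transpose h
  rwa [Matrix.transpose_pow, Matrix.transpose_sub, Matrix.transpose_one, Matrix.transpose_zero] at h2

lemma dual_mul {S : ℕ} {B : Mat d} (h : (B - 1)^S = 0) :
    B.transpose * dual B = 1 ∧ dual B * B.transpose = 1 := by
  have hT : (B.transpose - 1)^S = 0 := transpose_unip h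
  set T := B.transpose with hTdef
  set G := ∑ j ∈ range S, (1 - T)^j with hG
  have hpow : (1 - T)^S = 0 := by
    rw [show (1 - T) = -(T - 1) from (neg_sub _ _).symm, neg_pow, hT, mul_zero]
  have e2 : (1 - T - 1) = -T := by abel
  have hg : G * T = 1 := by
    have e1 := geom_sum_mul (1 - T) S
    rw [hpow, e2, zero_sub, mul_neg] at e1
    exact neg_injective e1
  have hg' : T * G = 1 := by
    have e1 := mul_geom_sum (1 - T) S
    rw [hpow, e2, zero_sub, neg_mul] at e1
    exact neg_injective e1
  have hdual : dual B = G := Matrix.inv_eq_right_inv hg'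
  rw [hdual]
  exact ⟨hg', hg⟩

variable {S : ℕ} {A B : Mat d}

lemma dualB_eq_one_add_hat (B : Mat d) : dual B = 1 + hat B := by rw [hat]; abel

lemma hatB_pow_eq_zero (h : (B - 1)^S = 0) : (hat B)^S = 0 := by
  obtain ⟨h1, h2⟩ := dual_mul h
  have hcomm : Commute (-(dual B)) (B.transpose - 1) := by
    apply Commute.neg_left
    apply Commute.sub_right _ (Commute.one_right _)
    exact h2.trans h1.symm
  have hhat : hat B = (-(dual B)) * (B.transpose - 1) := by
    rw [hat, neg_mul, mul_sub, mul_one, h2]; abel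
  rw [hhat, hcomm.mul_pow, transpose_unip h, mul_zero]

lemma BT_one_sub (h : (B - 1)^S = 0) : B.transpose - 1 = -(B.transpose * hat B) := by
  obtain ⟨h1, _⟩ := dual_mul h
  have h3 : B.transpose * (1 + hat B) = 1 := by rw [← dualB_eq_one_add_hat]; exact h1
  rw [mul_add, mul_one] at h3
  rw [← h3]; abel

lemma dualA_eq (h : (A - 1)^2 = 0) : dual A = 2 - A.transpose := by
  have hT : (A.transpose - 1)^2 = 0 := transpose_unip h
  apply Matrix.inv_eq_right_inv
  have h2 : A.transpose * (2 - A.transpose) = 1 - (A.transpose - 1)^2 := by noncomm_ring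
  rw [h2, hT, sub_zero]

lemma hatA_eq (h : (A - 1)^2 = 0) : hat A = 1 - A.transpose := by
  rw [hat, dualA_eq h, show (2 : Mat d) = 1 + 1 from one_add_one_eq_two.symm]; abel

lemma AT_eq (h : (A - 1)^2 = 0) : A.transpose = 1 - hat A := by
  rw [hatA_eq h]; abel

lemma hatA_sq (h : (A - 1)^2 = 0) : (hat A)^2 = 0 := by
  rw [hatA_eq h, show (1 - A.transpose) = -(A.transpose - 1) from (neg_sub _ _).symm, neg_pow,
    transpose_unip h, mul_zero]

lemma dual_comm (hAB : A * B = B * A) : dual A * dual B = dual B * dual A := by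
  have hT : A.transpose * B.transpose = B.transpose * A.transpose := by
    have h2 := congrArg Matrix.transpose hAB
    rw [Matrix.transpose_mul, Matrix.transpose_mul] at h2
    exact h2.symm
  rw [dual, dual, ← Matrix.mul_inv_rev, ← Matrix.mul_inv_rev, hT]

lemma hat_comm (hAB : A * B = B * A) : hat A * hat B = hat B * hat A := by
  have h := dual_comm hAB
  have e : hat A * hat B - hat B * hat A = dual A * dual B - dual B * dual A := by
    rw [hat, hat]; noncomm_ring
  have h2 : hat A * hat B - hat B * hat A = 0 := by rw [e, h, sub_self]
  exact sub_eq_zero.mp h2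

end MatrixLemmas

section ZPowLemmas
open Finset
variable {d : ℕ} {A B : Mat d} {S : ℕ}

lemma dualA_pow (h : (A - 1)^2 = 0) (n : ℕ) : (dual A)^n = 1 + (n : ℤ) • hat A := by
  induction n with
  | zero => simp
  | succ n ih =>
    have hsq : hat A * hat A = 0 := by rw [← pow_two]; exact hatA_sq h
    rw [pow_succ, ih, dualB_eq_one_add_hat A]
    rw [add_mul, one_mul, smul_mul_assoc, mul_add, mul_one, hsq, add_zero]
    push_cast
    rw [add_smul, one_smul]
    abel

lemma zpow_dualA (h : (A - 1)^2 = 0) (k : ℤ) : zpowM (dual A) k = 1 + k • hat A := by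
  cases k with
  | ofNat n => rw [Int.ofNat_eq_coe]; simp only [zpowM]; rw [dualA_pow h]
  | negSucc n =>
    have hsq : hat A * hat A = 0 := by rw [← pow_two]; exact hatA_sq h
    simp only [zpowM]
    rw [dualA_pow h]
    have hinv : (1 + ((n+1 : ℕ) : ℤ) • hat A) * (1 - ((n+1 : ℕ) : ℤ) • hat A) = 1 := by
      rw [mul_sub, mul_one, add_mul, one_mul, smul_mul_assoc, mul_smul_comm, hsq,
        smul_zero, smul_zero]
      abel
    rw [Matrix.inv_eq_right_inv hinv, Int.negSucc_eq]
    push_cast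
    rw [neg_smul]
    abel

/-- The polynomial expansion of `B̄^l`. -/
noncomputable def Fb {d : ℕ} (B : Mat d) (S : ℕ) (l : ℤ) : Mat d :=
  ∑ j ∈ Finset.range S, zchoose l j • (hat B)^j

lemma Fb_succ (hS : 1 ≤ S) (hBpow : (hat B)^S = 0) (l : ℤ) :
    Fb B S l * (1 + hat B) = Fb B S (l+1) := by
  obtain ⟨S', rfl⟩ : ∃ S', S = S' + 1 := ⟨S - 1, by omega⟩
  have expand : Fb B (S'+1) l * (1 + hat B)
      = Fb B (S'+1) l + ∑ j ∈ range (S'+1), zchoose l j • (hat B)^(j+1) := by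
    simp only [Fb]
    rw [Finset.sum_mul, ← Finset.sum_add_distrib]
    refine Finset.sum_congr rfl fun j _ => ?_
    rw [smul_mul_assoc, mul_add, mul_one, pow_succ, smul_add]
  rw [expand, Finset.sum_range_succ, hBpow, smul_zero, add_zero]
  have reindex : ∑ j ∈ range S', zchoose l j • (hat B)^(j+1)
      = ∑ j ∈ Finset.Ico 1 (S'+1), zchoose l (j-1) • (hat B)^j := by
    rw [Finset.sum_Ico_eq_sum_range]
    simp only [Nat.add_sub_cancel]
    refine Finset.sum_congr rfl fun j _ => ?_
    have e : 1 + j = j + 1 := by omega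
    rw [e, Nat.add_sub_cancel]
  rw [reindex]
  simp only [Fb]
  rw [Finset.range_eq_Ico,
    Finset.sum_eq_sum_Ico_succ_bot (by omega : 0 < S'+1) (fun j => zchoose l j • (hat B)^j),
    Finset.sum_eq_sum_Ico_succ_bot (by omega : 0 < S'+1) (fun j => zchoose (l+1) j • (hat B)^j)]
  rw [zchoose_zero_right, zchoose_zero_right, add_right_comm, add_assoc, ← Finset.sum_add_distrib]
  congr 1
  refine Finset.sum_congr rfl fun j hj => ?_
  rw [Finset.mem_Ico] at hj
  obtain ⟨jj, rfl⟩ : ∃ jj, j = jj + 1 := ⟨j - 1, by omega⟩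
  rw [Nat.add_sub_cancel, ← add_smul]
  congr 1
  rw [add_comm]
  exact (zchoose_pascal l jj).symm

lemma Fb_zero (hS : 1 ≤ S) : Fb B S 0 = 1 := by
  obtain ⟨S', rfl⟩ : ∃ S', S = S' + 1 := ⟨S - 1, by omega⟩
  simp only [Fb]
  rw [Finset.range_eq_Ico, Finset.sum_eq_sum_Ico_succ_bot (by omega : 0 < S'+1),
    zchoose_zero_right, pow_zero, one_smul]
  rw [Finset.sum_eq_zero fun j hj => by
    rw [Finset.mem_Ico] at hj
    rw [zchoose_zero_of_pos j (by omega), zero_smul]]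
  simp

lemma Fb_pow (hS : 1 ≤ S) (hBpow : (hat B)^S = 0) (l : ℤ) (n : ℕ) :
    Fb B S l * (1 + hat B)^n = Fb B S (l + n) := by
  induction n with
  | zero => simp
  | succ n ih =>
    rw [pow_succ, ← mul_assoc, ih, Fb_succ hS hBpow]
    push_cast
    ring_nf

lemma zpow_dualB (hS : 1 ≤ S) (h : (B - 1)^S = 0) (l : ℤ) :
    zpowM (dual B) l = Fb B S l := by
  have hBpow := hatB_pow_eq_zero h
  cases l with
  | ofNat n =>
    rw [Int.ofNat_eq_coe]
    simp only [zpowM]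
    rw [dualB_eq_one_add_hat B]
    have h2 := Fb_pow (B := B) hS hBpow 0 n
    rw [Fb_zero hS, one_mul, zero_add] at h2
    exact h2
  | negSucc n =>
    simp only [zpowM]
    have H : Fb B S (Int.negSucc n) * (dual B)^(n+1) = 1 := by
      rw [dualB_eq_one_add_hat B, Fb_pow hS hBpow]
      rw [show Int.negSucc n + ((n+1 : ℕ) : ℤ) = 0 by rw [Int.negSucc_eq]; push_cast; ring]
      exact Fb_zero hS
    exact Matrix.inv_eq_left_inv H

end ZPowLemmas

section VecLemmas
open Finset
variable {d : ℕ} {A B : Mat d} {S : ℕ}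

lemma sumM_mulVec {ι : Type*} (s : Finset ι) (f : ι → Mat d) (v : IVec d) :
    (∑ j ∈ s, f j) *ᵥ v = ∑ j ∈ s, (f j *ᵥ v) := by
  classical
  induction s using Finset.cons_induction with
  | empty => simp [Matrix.zero_mulVec]
  | cons a s ha ih => rw [Finset.sum_cons, Finset.sum_cons, Matrix.add_mulVec, ih]

lemma mulVec_sumv {ι : Type*} (s : Finset ι) (M : Mat d) (f : ι → IVec d) :
    M *ᵥ (∑ j ∈ s, f j) = ∑ j ∈ s, M *ᵥ (f j) := by
  classical
  induction s using Finset.cons_induction with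
  | empty => simp [Matrix.mulVec_zero]
  | cons a s ha ih => rw [Finset.sum_cons, Finset.sum_cons, Matrix.mulVec_add, ih]

lemma Fb_mulVec_eq (hS1 : 1 ≤ S) {m : IVec d} (l : ℤ) (s' : ℕ) (hs'S : s' ≤ S)
    (h0 : ∀ j, s' ≤ j → ((hat B)^j) *ᵥ m = 0) :
    Fb B S l *ᵥ m = ∑ j ∈ Finset.range s', zchoose l j • ((hat B)^j *ᵥ m) := by
  simp only [Fb]
  rw [sumM_mulVec]
  have e1 : ∀ j ∈ Finset.range S, (zchoose l j • (hat B)^j) *ᵥ m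
      = zchoose l j • ((hat B)^j *ᵥ m) := fun j _ => Matrix.smul_mulVec _ _ _
  rw [Finset.sum_congr rfl e1, Finset.range_eq_Ico,
    ← Finset.sum_Ico_consecutive _ (Nat.zero_le s') hs'S]
  have h2 : ∑ j ∈ Finset.Ico s' S, zchoose l j • ((hat B)^j *ᵥ m) = 0 :=
    Finset.sum_eq_zero (fun j hj => by
      rw [Finset.mem_Ico] at hj
      rw [h0 j hj.1, smul_zero])
  rw [h2, add_zero, ← Finset.range_eq_Ico]

end VecLemmas

section LockedConstruction
open Finset
variable {d : ℕ}

/-- Real pairing of an integer vector with a real vector. -/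
noncomputable def prR {d : ℕ} (v : IVec d) (x : Vec d) : ℝ :=
  dotProduct (fun i => (v i : ℝ)) x

lemma prR_mulVec (nv : IVec d) (M : Mat d) (x : Vec d) :
    prR (M.transpose *ᵥ nv) x = prR nv ((rmat M) *ᵥ x) := by
  unfold prR
  rw [Matrix.dotProduct_mulVec]
  congr 1
  funext j
  simp only [Matrix.mulVec, Matrix.vecMul, dotProduct, rmat, Matrix.map_apply,
    Matrix.transpose_apply]
  push_cast
  exact Finset.sum_congr rfl fun i _ => mul_comm _ _

lemma prR_neg (nv : IVec d) (x : Vec d) : prR (-nv) x = -prR nv x := by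
  unfold prR
  rw [← neg_dotProduct]
  congr 1
  funext i
  push_cast
  simp

lemma prR_zero (x : Vec d) : prR (0 : IVec d) x = 0 := by
  unfold prR
  rw [← zero_dotProduct (v := x)]
  congr 1
  funext i
  simp

lemma TAB_pair {A B : Mat d} {α β : Vec d} (h : TAB A B α β) (nv : IVec d) :
    prR ((A - 1).transpose *ᵥ nv) β = prR ((B - 1).transpose *ᵥ nv) α := by
  unfold TAB at h
  rw [prR_mulVec, prR_mulVec, h]

lemma gcd_rep {ι : Type*} [DecidableEq ι] (s : Finset ι) (f : ι → ℤ) :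
    ∃ x : ι → ℤ, ∑ i ∈ s, f i * x i = s.gcd f := by
  induction s using Finset.cons_induction with
  | empty => exact ⟨0, by simp⟩
  | cons a s ha ih =>
    obtain ⟨y, hy⟩ := ih
    refine ⟨fun i => if i = a then Int.gcdA (f a) (s.gcd f) else y i * Int.gcdB (f a) (s.gcd f), ?_⟩
    rw [Finset.sum_cons]
    beta_reduce
    rw [if_pos rfl]
    have e1 : ∑ i ∈ s, f i * (if i = a then Int.gcdA (f a) (s.gcd f)
        else y i * Int.gcdB (f a) (s.gcd f))
        = (∑ i ∈ s, f i * y i) * Int.gcdB (f a) (s.gcd f) := by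
      rw [Finset.sum_mul]
      refine Finset.sum_congr rfl fun i hi => ?_
      rw [if_neg (by rintro rfl; exact ha hi)]
      ring
    rw [e1, hy, Finset.cons_eq_insert, Finset.gcd_insert, ← Int.coe_gcd, Int.gcd_eq_gcd_ab]

lemma affT_one_zero (n : ℕ) : affT (1 : Mat n) (0 : Td n) = id := by
  funext y i
  simp only [affT, Matrix.one_apply, Pi.zero_apply, id_eq]
  rw [Finset.sum_congr rfl (fun j _ => by
    rw [show ((if i = j then (1:ℤ) else 0) • y j) = (if i = j then y j else 0) by
      split <;> simp])]
  rw [Finset.sum_ite_eq Finset.univ i y, if_pos (Finset.mem_univ i), add_zero]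

lemma isLocked_of {S : ℕ} {A B : Mat d} (hA : (A - 1)^2 = 0) (hB : (B - 1)^S = 0)
    (u v q : IVec d) (hq0 : q ≠ 0)
    (hqA : hat A *ᵥ u = q) (huB : hat B *ᵥ u = 0)
    (hvA : hat A *ᵥ v = 0) (hvB : hat B *ᵥ v = q)
    (hAq : hat A *ᵥ q = 0) (hBq : hat B *ᵥ q = 0) : IsLocked A B := by
  classical
  intro α β hTab
  have hATr : (A - 1).transpose = -(hat A) := by
    rw [Matrix.transpose_sub, Matrix.transpose_one, hatA_eq hA, neg_sub]
  have hBT : B.transpose - 1 = -(B.transpose * hat B) := BT_one_sub hB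
  have hBTr : (B - 1).transpose = -(B.transpose * hat B) := by
    rw [Matrix.transpose_sub, Matrix.transpose_one, hBT]
  have hBTq : B.transpose *ᵥ q = q := by
    have e : B.transpose = 1 - B.transpose * hat B := by rw [sub_eq_add_neg, ← hBT]; abel
    rw [e, Matrix.sub_mulVec, Matrix.one_mulVec, ← Matrix.mulVec_mulVec, hBq,
      Matrix.mulVec_zero, sub_zero]
  have hATq : A.transpose *ᵥ q = q := by
    rw [AT_eq hA, Matrix.sub_mulVec, Matrix.one_mulVec, hAq, sub_zero]
  -- the two pairing identities
  have hqβ : prR q β = 0 := by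
    have h1 := TAB_pair hTab u
    rw [hATr, hBTr, Matrix.neg_mulVec, Matrix.neg_mulVec, hqA, ← Matrix.mulVec_mulVec, huB,
      Matrix.mulVec_zero, neg_zero, prR_neg, prR_zero] at h1
    linarith [h1]
  have hqα : prR q α = 0 := by
    have h1 := TAB_pair hTab v
    rw [hATr, hBTr, Matrix.neg_mulVec, Matrix.neg_mulVec, hvA, ← Matrix.mulVec_mulVec, hvB,
      hBTq, neg_zero, prR_neg, prR_zero] at h1
    linarith [h1]
  -- gcd normalization
  set g : ℤ := Finset.univ.gcd q with hgdef
  have hgdvd : ∀ i, g ∣ q i := fun i => Finset.gcd_dvd (Finset.mem_univ i)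
  have hg0 : g ≠ 0 := by
    intro h
    apply hq0
    funext i
    exact Finset.gcd_eq_zero_iff.mp (hgdef ▸ h) i (Finset.mem_univ i)
  set w : IVec d := fun i => q i / g with hwdef
  have hqw : ∀ i, q i = g * w i := fun i => (Int.mul_ediv_cancel' (hgdvd i)).symm
  have hq_eq : q = g • w := by funext i; rw [hqw i]; rfl
  obtain ⟨x, hx⟩ := gcd_rep (Finset.univ : Finset (Fin d)) q
  have hwx : ∑ i, w i * x i = 1 := by
    apply mul_left_cancel₀ hg0
    rw [mul_one, Finset.mul_sum]
    have e2 : ∑ i, g * (w i * x i) = ∑ i, q i * x i :=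
      Finset.sum_congr rfl fun i _ => by rw [← mul_assoc, ← hqw i]
    rw [e2, hx, hgdef]
  have hcancel : ∀ (a b : IVec d), g • a = g • b → a = b := fun a b h =>
    funext fun i => mul_left_cancel₀ hg0 (congrFun h i)
  have hATw : A.transpose *ᵥ w = w := by
    apply hcancel
    rw [← Matrix.mulVec_smul, ← hq_eq, hATq, hq_eq]
  have hBTw : B.transpose *ᵥ w = w := by
    apply hcancel
    rw [← Matrix.mulVec_smul, ← hq_eq, hBTq, hq_eq]
  have key : ∀ γ : Vec d, prR q γ = (g:ℝ) * ∑ i, (w i : ℝ) * γ i := by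
    intro γ
    unfold prR dotProduct
    rw [Finset.mul_sum]
    refine Finset.sum_congr rfl fun i _ => ?_
    show ((q i : ℝ)) * γ i = (g:ℝ) * ((w i:ℝ) * γ i)
    rw [hqw i]
    push_cast
    ring
  have hg0R : ((g:ℝ)) ≠ 0 := by exact_mod_cast hg0
  have hwα : ∑ i, (w i : ℝ) * α i = 0 := by
    rw [key α] at hqα
    exact (mul_eq_zero.mp hqα).resolve_left hg0R
  have hwβ : ∑ i, (w i : ℝ) * β i = 0 := by
    rw [key β] at hqβ
    exact (mul_eq_zero.mp hqβ).resolve_left hg0R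
  -- the rank-one identity factor
  set φ : ℝ →+ AddCircle (1:ℝ) := QuotientAddGroup.mk' (AddSubgroup.zmultiples (1:ℝ)) with hφ
  have hφ_eq : ∀ r : ℝ, (r : AddCircle (1:ℝ)) = φ r := fun r => rfl
  have intertwine : ∀ (M : Mat d) (γ : Vec d), M.transpose *ᵥ w = w →
      (∑ i, (w i : ℝ) * γ i = 0) →
      projT (Matrix.of fun (_ : Fin 1) j => w j) ∘ affT M (toT γ)
        = affT (1 : Mat 1) (0 : Td 1) ∘ projT (Matrix.of fun (_ : Fin 1) j => w j) := by
    intro M γ hMw hγ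
    funext xx i
    simp only [Function.comp_apply, affT_one_zero, id_eq]
    simp only [projT, affT, toT, Matrix.of_apply]
    have e1 : ∀ j, w j • ((∑ k, M j k • xx k) + ((γ j : ℝ) : AddCircle (1:ℝ)))
        = (∑ k, (w j * M j k) • xx k) + w j • ((γ j : ℝ) : AddCircle (1:ℝ)) := by
      intro j
      rw [smul_add, Finset.smul_sum]
      congr 1
      exact Finset.sum_congr rfl fun k _ => (smul_smul _ _ _)
    rw [Finset.sum_congr rfl fun j _ => e1 j, Finset.sum_add_distrib]
    have e2 : ∑ j, ∑ k, (w j * M j k) • xx k = ∑ k, w k • xx k := by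
      rw [Finset.sum_comm]
      refine Finset.sum_congr rfl fun k _ => ?_
      rw [← Finset.sum_smul]
      congr 1
      have : (M.transpose *ᵥ w) k = ∑ j, w j * M j k := by
        simp only [Matrix.mulVec, dotProduct, Matrix.transpose_apply]
        exact Finset.sum_congr rfl fun j _ => mul_comm _ _
      rw [← this, hMw]
    have e3 : ∑ j, w j • ((γ j : ℝ) : AddCircle (1:ℝ)) = 0 := by
      have : ∀ j, w j • ((γ j : ℝ) : AddCircle (1:ℝ)) = φ (w j • γ j) := by
        intro j
        rw [hφ_eq, map_zsmul]
      rw [Finset.sum_congr rfl fun j _ => this j, ← map_sum]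
      have : ∑ j, w j • γ j = 0 := by
        rw [Finset.sum_congr rfl fun j (_ : j ∈ Finset.univ) =>
          (zsmul_eq_mul (γ j) (w j) : w j • γ j = (w j : ℝ) * γ j)]
        exact hγ
      rw [this, map_zero]
    rw [e2, e3, add_zero]
  refine ⟨⟨1, one_pos, Matrix.of (fun _ j => w j), ?_, 1, 1, 0, 0, ?_, ?_, ?_⟩, Or.inl ⟨affT_one_zero 1, affT_one_zero 1⟩⟩
  · -- surjectivity
    intro y
    refine ⟨fun j => y 0 * x j, ?_⟩
    funext i
    show ∑ j, (Matrix.of fun (_ : Fin 1) j => w j) i j * (y 0 * x j) = y i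
    simp only [Matrix.of_apply]
    have e : ∑ j, w j * (y 0 * x j) = y 0 * ∑ j, w j * x j := by
      rw [Finset.mul_sum]
      exact Finset.sum_congr rfl fun j _ => by ring
    rw [e, hwx, mul_one, Subsingleton.elim 0 i]
  · exact intertwine A α hATw hwα
  · exact intertwine B β hBTw hwβ
  · exact ⟨Equiv.refl _, ⟨1, 0, by rw [affT_one_zero 1]; rfl⟩,
      ⟨Equiv.refl _, Subgroup.mem_zpowers _, by rw [affT_one_zero 1]; rfl⟩,
      ⟨Equiv.refl _, Subgroup.mem_zpowers _, by rw [affT_one_zero 1]; rfl⟩⟩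

end LockedConstruction

/-- **Lemma (polynomial expansion of `Ā^k B̄^l m`).** Let `⟨a,b⟩` be an unlocked
parabolic affine `ℤ²`-action with `a` step-2 and `b` of step `S`. For any `m ∈ 𝒞₃` of
step `s = s(m)` there is `t = t(m,A,B)`, `1 ≤ t ≤ s-1`, with `Â B̂^j m ≠ 0` for `j < t`,
`Â B̂^j m = 0` for `j ≥ t`, and for all `k, l ∈ ℤ`:
`Ā^k B̄^l m = m + kÂm + ∑_{j=1}^{t-1} C(l,j) B̂^j (m + kÂm) + ∑_{j=t}^{s-1} C(l,j) B̂^j m`,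
where `C(l,j) = l(l-1)⋯(l-j+1)/j!`. -/
theorem polynomial_expansion (d S : ℕ) (A B : Mat d) (α β : Vec d)
    (hA2 : IsStep2 A) (hBS : IsStepParabolic B S)
    (hcomm : A * B = B * A) (hTAB : TAB A B α β)
    (hunlocked : ¬ IsLocked A B)
    (m : IVec d) (hm : InC3 A B m) (s : ℕ) (hs : stepOf B m s) :
    ∃ t : ℕ, 1 ≤ t ∧ t ≤ s - 1 ∧
      (∀ j : ℕ, j < t → ((hat A) * (hat B) ^ j).mulVec m ≠ 0) ∧
      (∀ j : ℕ, t ≤ j → ((hat A) * (hat B) ^ j).mulVec m = 0) ∧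
      ∀ k l : ℤ,
        (zpowM (dual A) k * zpowM (dual B) l).mulVec m =
          m + k • (hat A).mulVec m +
            (∑ j ∈ Finset.Ico 1 t, zchoose l j •
              ((hat B) ^ j).mulVec (m + k • (hat A).mulVec m)) +
            ∑ j ∈ Finset.Ico t s, zchoose l j • ((hat B) ^ j).mulVec m := by
  classical
  obtain ⟨hA, _hAne⟩ := hA2
  obtain ⟨hB, hBne⟩ := hBS
  have hS1 : 1 ≤ S := by
    rcases Nat.eq_zero_or_pos S with h0 | h
    · exfalso
      subst h0
      simp only [pow_zero] at hB
      exact hBne (by simpa using hB)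
    · exact h
  obtain ⟨hm0, hmC1, hmRes⟩ := hm
  have hcH : hat A * hat B = hat B * hat A := hat_comm hcomm
  have hCommute : Commute (hat A) (hat B) := hcH
  have hAsq : hat A * hat A = 0 := by rw [← pow_two]; exact hatA_sq hA
  have hBS0 : (hat B)^S = 0 := hatB_pow_eq_zero hB
  have hsS : s ≤ S := hs.2 S (by rw [hBS0, Matrix.zero_mulVec])
  have hs_zero : ∀ j, s ≤ j → ((hat B)^j) *ᵥ m = 0 := by
    intro j hj
    have e : (hat B)^j = (hat B)^(j-s) * (hat B)^s := by rw [← pow_add]; congr 1; omega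
    rw [e, ← Matrix.mulVec_mulVec, hs.1, Matrix.mulVec_zero]
  have hs1 : 1 ≤ s := by
    rcases Nat.eq_zero_or_pos s with h0 | h
    · exfalso
      apply hm0
      have h2 := hs.1
      rwa [h0, pow_zero, Matrix.one_mulVec] at h2
    · exact h
  have heval : ∀ k l : ℤ, (zpowM (dual A) k * zpowM (dual B) l) *ᵥ m
      = (Fb B S l *ᵥ m) + k • (hat A *ᵥ (Fb B S l *ᵥ m)) := by
    intro k l
    rw [← Matrix.mulVec_mulVec, zpow_dualA hA, zpow_dualB hS1 hB,
      Matrix.add_mulVec, Matrix.one_mulVec, Matrix.smul_mulVec]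
  have hAm_ne : hat A *ᵥ m ≠ 0 := by
    intro hAm
    by_cases hBm : hat B *ᵥ m = 0
    · apply hmC1
      refine ⟨hm0, ?_, ?_⟩
      · rw [dualB_eq_one_add_hat A, Matrix.add_mulVec, Matrix.one_mulVec, hAm, add_zero]
      · rw [dualB_eq_one_add_hat B, Matrix.add_mulVec, Matrix.one_mulVec, hBm, add_zero]
    · apply hmRes
      refine ⟨hm0, ⟨1, 0, by simp, ?_⟩, Or.inr ?_⟩
      · rw [heval 1 0, Fb_zero hS1, Matrix.one_mulVec, hAm, smul_zero, add_zero]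
      · rw [dualB_eq_one_add_hat B, Matrix.add_mulVec, Matrix.one_mulVec]
        intro hcon
        exact hBm (by rwa [add_eq_left] at hcon)
  have hs2 : 2 ≤ s := by
    by_contra hc
    have hseq : s = 1 := by omega
    have hBm : hat B *ᵥ m = 0 := by
      have h2 := hs.1
      rwa [hseq, pow_one] at h2
    apply hmRes
    refine ⟨hm0, ⟨0, 1, by simp, ?_⟩, Or.inl ?_⟩
    · rw [heval 0 1, zero_smul, add_zero]
      rw [Fb_mulVec_eq hS1 1 1 hS1 (fun j hj => by
        have e : (hat B)^j = (hat B)^(j-1) * (hat B)^1 := by rw [← pow_add]; congr 1; omega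
        rw [e, ← Matrix.mulVec_mulVec, pow_one, hBm, Matrix.mulVec_zero])]
      rw [Finset.sum_range_one, zchoose_zero_right, pow_zero, Matrix.one_mulVec, one_smul]
    · rw [dualB_eq_one_add_hat A, Matrix.add_mulVec, Matrix.one_mulVec]
      intro hcon
      exact hAm_ne (by rwa [add_eq_left] at hcon)
  have hex : ∃ j, (hat A * (hat B)^j) *ᵥ m = 0 :=
    ⟨s, by rw [← Matrix.mulVec_mulVec, hs.1, Matrix.mulVec_zero]⟩
  have hcpow : ∀ j : ℕ, hat A * (hat B)^j = (hat B)^j * hat A :=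
    fun j => (hCommute.pow_right j).eq
  set t := Nat.find hex with htdef
  have htspec : (hat A * (hat B)^t) *ᵥ m = 0 := Nat.find_spec hex
  have htmin : ∀ j, j < t → (hat A * (hat B)^j) *ᵥ m ≠ 0 := fun j hj => Nat.find_min hex hj
  have htall : ∀ j, t ≤ j → (hat A * (hat B)^j) *ᵥ m = 0 := by
    intro j hj
    have e : hat A * (hat B)^j = (hat B)^(j-t) * (hat A * (hat B)^t) := by
      rw [show (hat B)^j = (hat B)^(j-t) * (hat B)^t by rw [← pow_add]; congr 1; omega]
      rw [← mul_assoc, (hCommute.pow_right (j-t)).eq, mul_assoc]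
    rw [e, ← Matrix.mulVec_mulVec, htspec, Matrix.mulVec_zero]
  have hts : t ≤ s := Nat.find_le (by rw [← Matrix.mulVec_mulVec, hs.1, Matrix.mulVec_zero])
  have ht1 : 1 ≤ t := by
    rcases Nat.eq_zero_or_pos t with h0 | h
    · exfalso
      apply hAm_ne
      have h2 := htspec
      rwa [h0, pow_zero, mul_one] at h2
    · exact h
  have hpowB : ∀ r : ℕ, 1 ≤ r → hat B * (hat B)^(r-1) = (hat B)^r := by
    intro r hr
    rw [← pow_succ']
    congr 1
    omega
  have hts1 : t ≤ s - 1 := by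
    by_contra hc
    have hq_ne : (hat A * (hat B)^(s-1)) *ᵥ m ≠ 0 := htmin (s-1) (by omega)
    apply hunlocked
    refine isLocked_of hA hB ((hat B)^(s-1) *ᵥ m) ((hat A * (hat B)^(s-2)) *ᵥ m)
      ((hat A * (hat B)^(s-1)) *ᵥ m) hq_ne ?_ ?_ ?_ ?_ ?_ ?_
    · rw [Matrix.mulVec_mulVec]
    · rw [Matrix.mulVec_mulVec, hpowB s hs1]
      exact hs.1
    · rw [Matrix.mulVec_mulVec, ← mul_assoc, hAsq, zero_mul, Matrix.zero_mulVec]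
    · rw [Matrix.mulVec_mulVec, ← mul_assoc, ← hcH, mul_assoc,
        show hat B * (hat B)^(s-2) = (hat B)^(s-1) by
          rw [← pow_succ']; congr 1; omega]
    · rw [Matrix.mulVec_mulVec, ← mul_assoc, hAsq, zero_mul, Matrix.zero_mulVec]
    · rw [Matrix.mulVec_mulVec, ← mul_assoc, ← hcH, mul_assoc, hpowB s hs1,
        ← Matrix.mulVec_mulVec, hs.1, Matrix.mulVec_zero]
  refine ⟨t, ht1, hts1, htmin, htall, ?_⟩
  intro k l
  have hX : Fb B S l *ᵥ m = ∑ j ∈ Finset.range s, zchoose l j • ((hat B)^j *ᵥ m) :=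
    Fb_mulVec_eq hS1 l s hsS hs_zero
  have hAX : hat A *ᵥ (Fb B S l *ᵥ m)
      = ∑ j ∈ Finset.range t, zchoose l j • ((hat A * (hat B)^j) *ᵥ m) := by
    rw [hX, mulVec_sumv]
    have e1 : ∀ j ∈ Finset.range s, hat A *ᵥ (zchoose l j • ((hat B)^j *ᵥ m))
        = zchoose l j • ((hat A * (hat B)^j) *ᵥ m) := by
      intro j _
      rw [Matrix.mulVec_smul, Matrix.mulVec_mulVec]
    rw [Finset.sum_congr rfl e1, Finset.range_eq_Ico,
      ← Finset.sum_Ico_consecutive _ (Nat.zero_le t) hts]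
    have h2 : ∑ j ∈ Finset.Ico t s, zchoose l j • ((hat A * (hat B)^j) *ᵥ m) = 0 :=
      Finset.sum_eq_zero (fun j hj => by
        rw [Finset.mem_Ico] at hj
        rw [htall j hj.1, smul_zero])
    rw [h2, add_zero, ← Finset.range_eq_Ico]
  rw [heval k l, hAX, hX]
  have hsplit1 : ∑ j ∈ Finset.range s, zchoose l j • ((hat B)^j *ᵥ m)
      = m + ((∑ j ∈ Finset.Ico 1 t, zchoose l j • ((hat B)^j *ᵥ m))
        + ∑ j ∈ Finset.Ico t s, zchoose l j • ((hat B)^j *ᵥ m)) := by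
    rw [Finset.range_eq_Ico, ← Finset.sum_Ico_consecutive _ (Nat.zero_le t) hts,
      Finset.sum_eq_sum_Ico_succ_bot (show 0 < t by omega),
      zchoose_zero_right, pow_zero, Matrix.one_mulVec, one_smul, add_assoc]
  have hsplit2 : ∑ j ∈ Finset.range t, zchoose l j • ((hat A * (hat B)^j) *ᵥ m)
      = (hat A *ᵥ m) + ∑ j ∈ Finset.Ico 1 t, zchoose l j • ((hat A * (hat B)^j) *ᵥ m) := by
    rw [Finset.range_eq_Ico, Finset.sum_eq_sum_Ico_succ_bot (show 0 < t by omega),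
      zchoose_zero_right, pow_zero, mul_one, one_smul]
  have hterm : ∀ j ∈ Finset.Ico 1 t,
      zchoose l j • ((hat B)^j *ᵥ (m + k • (hat A *ᵥ m)))
      = zchoose l j • ((hat B)^j *ᵥ m) + k • (zchoose l j • ((hat A * (hat B)^j) *ᵥ m)) := by
    intro j _
    rw [Matrix.mulVec_add, Matrix.mulVec_smul, Matrix.mulVec_mulVec, ← hcpow j, smul_add,
      smul_comm (zchoose l j) k]
  rw [hsplit1, hsplit2, Finset.sum_congr rfl hterm, Finset.sum_add_distrib,
    ← Finset.smul_sum, smul_add]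
  abel

end ParabolicKAM
end

section
/- Let ⟨a,b⟩ be an unlocked parabolic affine ℤ²-action with a = A+α step-2. For any ξ > 0 there exists c = c(A,B,ξ) > 0 such that for any non-resonant m ∈ C₃ with s(m) ≥ 3 which is the lowest point on its Ā-orbit, for every k ∈ ℤ and every l ∈ ℤ with |l| < (ξ|m|)^{δ(m)}, one has |Ā^kB̄^l m| ≥ c|m|^{δ(m)}, where δ(m) = 0.99/s(m). -/
open MeasureTheory

namespace ParabolicKAM

section Aux
variable {d : ℕ}

private lemma zpowM_natCast (M : Mat d) (n : ℕ) : zpowM M (Int.ofNat n) = M ^ n := rfl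

private lemma zpowM_negSucc (M : Mat d) (n : ℕ) : zpowM M (Int.negSucc n) = (M ^ (n + 1))⁻¹ := rfl

private lemma zpowM_units (u : (Mat d)ˣ) (k : ℤ) : zpowM (u : Mat d) k = ↑(u ^ k) := by
  cases k with
  | ofNat n =>
      rw [zpowM_natCast, Int.ofNat_eq_natCast, zpow_natCast, Units.val_pow_eq_pow_val]
  | negSucc n =>
      rw [zpowM_negSucc, zpow_negSucc]
      have h : ((u : Mat d) ^ (n + 1)) * ↑((u ^ (n + 1))⁻¹) = 1 := by
        rw [← Units.val_pow_eq_pow_val, ← Units.val_mul, mul_inv_cancel, Units.val_one]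
      exact Matrix.inv_eq_right_inv h

private lemma zpowM_one_add_nilsq (N : Mat d) (hN : N * N = 0) (k : ℤ) :
    zpowM (1 + N) k = 1 + k • N := by
  have h1 : ((1 : Mat d) + N) * (1 - N) = 1 := by
    have e : ((1 : Mat d) + N) * (1 - N) = 1 - N * N := by noncomm_ring
    rw [e, hN, sub_zero]
  have h2 : ((1 : Mat d) - N) * (1 + N) = 1 := by
    have e : ((1 : Mat d) - N) * (1 + N) = 1 - N * N := by noncomm_ring
    rw [e, hN, sub_zero]
  have hval : ((⟨1 + N, 1 - N, h1, h2⟩ : (Mat d)ˣ) : Mat d) = 1 + N := rfl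
  rw [← hval, zpowM_units]
  set u : (Mat d)ˣ := ⟨1 + N, 1 - N, h1, h2⟩ with hu
  induction k using Int.induction_on with
  | zero => simp
  | succ i ih =>
      rw [zpow_add_one, Units.val_mul, ih]
      have hval' : ((u : Mat d)) = 1 + N := rfl
      rw [hval', mul_add, mul_one, add_mul, one_mul, smul_mul_assoc, hN, smul_zero, add_zero,
        add_smul, one_smul]
      abel
  | pred i ih =>
      rw [zpow_sub_one, Units.val_mul, ih]
      have hval' : ((u⁻¹ : (Mat d)ˣ) : Mat d) = 1 - N := rfl
      rw [hval', mul_sub, mul_one, add_mul, one_mul, smul_mul_assoc, hN, smul_zero, add_zero,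
        sub_smul, one_smul]
      abel

noncomputable def EV {d : ℕ} (v : IVec d) : EuclideanSpace ℝ (Fin d) := WithLp.toLp 2 (fun i => (v i : ℝ))

private lemma inorm_eq (v : IVec d) : inorm v = ‖EV v‖ := by
  rw [EuclideanSpace.norm_eq]
  unfold inorm EV
  congr 1
  refine Finset.sum_congr rfl fun i _ => ?_
  rw [Real.norm_eq_abs, sq_abs, WithLp.ofLp_toLp]

private lemma EV_add (x y : IVec d) : EV (x + y) = EV x + EV y := by
  ext i
  show ((x i + y i : ℤ) : ℝ) = (EV x i) + (EV y i)
  push_cast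
  rfl

private lemma EV_sub (x y : IVec d) : EV (x - y) = EV x - EV y := by
  ext i
  show ((x i - y i : ℤ) : ℝ) = (EV x i) - (EV y i)
  push_cast
  rfl

private lemma inorm_nonneg (v : IVec d) : 0 ≤ inorm v := Real.sqrt_nonneg _

private lemma inorm_add_le (x y : IVec d) : inorm (x + y) ≤ inorm x + inorm y := by
  rw [inorm_eq, inorm_eq, inorm_eq, EV_add]
  exact norm_add_le _ _

private lemma inorm_sub_le (x y : IVec d) : inorm (x - y) ≤ inorm x + inorm y := by
  rw [inorm_eq, inorm_eq, inorm_eq, EV_sub]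
  exact norm_sub_le _ _

private lemma one_le_inorm {v : IVec d} (h : v ≠ 0) : 1 ≤ inorm v := by
  obtain ⟨i, hi⟩ := Function.ne_iff.mp h
  have h1 : (1 : ℤ) ≤ |v i| := Int.one_le_abs (by simpa using hi)
  have h2 : (1 : ℝ) ≤ ((v i : ℝ)) ^ 2 := by
    have : (1 : ℤ) ≤ (v i) ^ 2 := by nlinarith [sq_abs (v i)]
    exact_mod_cast this
  have h3 : (1 : ℝ) ≤ ∑ j, ((v j : ℝ)) ^ 2 :=
    le_trans h2 (Finset.single_le_sum (f := fun j => ((v j : ℝ)) ^ 2)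
      (fun j _ => sq_nonneg _) (Finset.mem_univ i))
  calc (1 : ℝ) = Real.sqrt 1 := Real.sqrt_one.symm
    _ ≤ inorm v := Real.sqrt_le_sqrt h3

private lemma eopNorm_nonneg (M : Mat d) : 0 ≤ eopNorm M := norm_nonneg _

private lemma EV_mulVec (M : Mat d) (v : IVec d) :
    EV (M.mulVec v) = Matrix.toEuclideanLin (rmat M) (EV v) := by
  ext i
  rw [Matrix.toEuclideanLin_apply]
  show ((M.mulVec v) i : ℝ) = ((rmat M).mulVec (fun j => (v j : ℝ))) i
  simp only [Matrix.mulVec, dotProduct, rmat, Matrix.map_apply]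
  push_cast
  rfl

private lemma inorm_mulVec_le (M : Mat d) (v : IVec d) :
    inorm (M.mulVec v) ≤ eopNorm M * inorm v := by
  rw [inorm_eq, inorm_eq, EV_mulVec]
  have h := (LinearMap.toContinuousLinearMap (Matrix.toEuclideanLin (rmat M))).le_opNorm (EV v)
  rw [LinearMap.coe_toContinuousLinearMap'] at h
  exact h

end Aux

section Poly
variable {d : ℕ}

private lemma poly_growth (u : (Mat d)ˣ) (N : Mat d) (hu : (u : Mat d) = 1 + N) (s : ℕ) :
    ∀ (w : IVec d), (N ^ (s + 1)).mulVec w = 0 →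
      ∀ t : ℤ, inorm ((↑(u ^ t) : Mat d).mulVec w) ≤
        (1 + eopNorm N) ^ (s + 1) * (1 + |(t : ℝ)|) ^ s * inorm w := by
  induction s with
  | zero =>
      intro w hw t
      rw [pow_one] at hw
      have h1 : (u : Mat d).mulVec w = w := by
        rw [hu, Matrix.add_mulVec, Matrix.one_mulVec, hw, add_zero]
      have h2 : ((u⁻¹ : (Mat d)ˣ) : Mat d).mulVec w = w := by
        have e : ((u⁻¹ : (Mat d)ˣ) : Mat d).mulVec ((u : Mat d).mulVec w) = w := by
          rw [Matrix.mulVec_mulVec, ← Units.val_mul, inv_mul_cancel, Units.val_one,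
            Matrix.one_mulVec]
        rw [h1] at e
        exact e
      have fix : ∀ t : ℤ, ((↑(u ^ t) : Mat d)).mulVec w = w := by
        intro t
        induction t using Int.induction_on with
        | zero => simp [Matrix.one_mulVec]
        | succ i ihh => rw [zpow_add_one, Units.val_mul, ← Matrix.mulVec_mulVec, h1, ihh]
        | pred i ihh => rw [zpow_sub_one, Units.val_mul, ← Matrix.mulVec_mulVec, h2, ihh]
      rw [fix t, pow_zero, pow_one, mul_one]
      nlinarith [inorm_nonneg w, eopNorm_nonneg N]
  | succ s ih =>
      intro w hw t
      have he0 : 0 ≤ eopNorm N := eopNorm_nonneg N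
      set e := eopNorm N with he
      set w' := N.mulVec w with hw'def
      have hw' : (N ^ (s + 1)).mulVec w' = 0 := by
        rw [hw'def, Matrix.mulVec_mulVec, ← pow_succ]
        exact hw
      have ihw' := ih w' hw'
      have hcNw : inorm w' ≤ e * inorm w := inorm_mulVec_le N w
      have hW0 : 0 ≤ inorm w := inorm_nonneg w
      set Ks := (1 + e) ^ (s + 1) with hKs
      have hKs1 : (1 : ℝ) ≤ Ks := by
        simpa using pow_le_pow_left₀ zero_le_one (by linarith : (1:ℝ) ≤ 1 + e) (s + 1)
      set E := e * inorm w with hE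
      have hE0 : 0 ≤ E := mul_nonneg he0 hW0
      have stepup : ∀ j : ℤ, ((↑(u ^ (j + 1)) : Mat d)).mulVec w
          = (↑(u ^ j) : Mat d).mulVec w + (↑(u ^ j) : Mat d).mulVec w' := by
        intro j
        rw [zpow_add_one, Units.val_mul, hu, mul_add, mul_one, Matrix.add_mulVec,
          ← Matrix.mulVec_mulVec]
      have stepdown : ∀ j : ℤ, ((↑(u ^ (j - 1)) : Mat d)).mulVec w
          = (↑(u ^ j) : Mat d).mulVec w - (↑(u ^ (j - 1)) : Mat d).mulVec w' := by
        intro j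
        have e1 : u ^ j = u ^ (j - 1) * u := by
          rw [zpow_sub_one, inv_mul_cancel_right]
        have e2 : (↑(u ^ j) : Mat d) = ↑(u ^ (j - 1)) + (↑(u ^ (j - 1)) : Mat d) * N := by
          nth_rewrite 1 [e1]
          rw [Units.val_mul, hu, mul_add, mul_one]
        rw [e2, Matrix.add_mulVec, ← Matrix.mulVec_mulVec]
        abel
      have hb2 : ∀ j : ℤ, inorm ((↑(u ^ j) : Mat d).mulVec w')
          ≤ Ks * (1 + |(j : ℝ)|) ^ s * E := by
        intro j
        refine le_trans (ihw' j) ?_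
        exact mul_le_mul_of_nonneg_left hcNw (mul_nonneg (by linarith) (by positivity))
      have Q : ∀ t : ℤ, inorm ((↑(u ^ t) : Mat d).mulVec w)
          ≤ inorm w + |(t : ℝ)| * (Ks * (1 + |(t : ℝ)|) ^ s * E) := by
        intro t
        induction t using Int.induction_on with
        | zero => simp [Matrix.one_mulVec]
        | succ i ihh =>
            have key := inorm_add_le ((↑(u ^ (i:ℤ)) : Mat d).mulVec w)
              ((↑(u ^ (i:ℤ)) : Mat d).mulVec w')
            rw [← stepup (i:ℤ)] at key
            have hbb := hb2 (i:ℤ)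
            push_cast at ihh hbb key ⊢
            rw [abs_of_nonneg (by positivity : (0:ℝ) ≤ (i:ℝ))] at ihh hbb
            rw [abs_of_nonneg (by positivity : (0:ℝ) ≤ (i:ℝ) + 1)]
            have hpow : ((1:ℝ) + (i:ℝ)) ^ s ≤ (1 + ((i:ℝ) + 1)) ^ s :=
              pow_le_pow_left₀ (by positivity) (by linarith) s
            have hfin : Ks * (1 + (i:ℝ)) ^ s * E ≤ Ks * (1 + ((i:ℝ) + 1)) ^ s * E :=
              mul_le_mul_of_nonneg_right
                (mul_le_mul_of_nonneg_left hpow (by linarith)) hE0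
            nlinarith [key, ihh, hbb, hfin, hE0, (by positivity : (0:ℝ) ≤ (i:ℝ))]
        | pred i ihh =>
            have key := inorm_sub_le ((↑(u ^ (-(i:ℤ))) : Mat d).mulVec w)
              ((↑(u ^ (-(i:ℤ) - 1)) : Mat d).mulVec w')
            rw [← stepdown (-(i:ℤ))] at key
            have hbb := hb2 (-(i:ℤ) - 1)
            push_cast at ihh hbb key ⊢
            rw [show |-(i:ℝ)| = (i:ℝ) by rw [abs_neg]; exact abs_of_nonneg (by positivity)] at ihh
            rw [show |-(i:ℝ) - 1| = (i:ℝ) + 1 by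
              rw [show -(i:ℝ) - 1 = -((i:ℝ) + 1) by ring, abs_neg]
              exact abs_of_nonneg (by positivity)] at hbb ⊢
            have hpow : ((1:ℝ) + (i:ℝ)) ^ s ≤ (1 + ((i:ℝ) + 1)) ^ s :=
              pow_le_pow_left₀ (by positivity) (by linarith) s
            have hfin : Ks * (1 + (i:ℝ)) ^ s * E ≤ Ks * (1 + ((i:ℝ) + 1)) ^ s * E :=
              mul_le_mul_of_nonneg_right
                (mul_le_mul_of_nonneg_left hpow (by linarith)) hE0
            nlinarith [key, ihh, hbb, hfin, hE0, (by positivity : (0:ℝ) ≤ (i:ℝ))]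
      have hX0 : 0 ≤ |(t : ℝ)| := abs_nonneg _
      set X := |(t : ℝ)| with hX
      have h1 : (1:ℝ) ≤ (1 + X) ^ (s + 1) := by
        simpa using pow_le_pow_left₀ zero_le_one (by linarith : (1:ℝ) ≤ 1 + X) (s + 1)
      have h2 : X * (1 + X) ^ s ≤ (1 + X) ^ (s + 1) := by
        rw [pow_succ]
        calc X * (1 + X) ^ s = (1 + X) ^ s * X := by ring
          _ ≤ (1 + X) ^ s * (1 + X) := by
              exact mul_le_mul_of_nonneg_left (by linarith) (by positivity)
      have h3 : 1 + Ks * e ≤ (1 + e) ^ (s + 1 + 1) := by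
        rw [pow_succ, ← hKs]
        nlinarith [hKs1, he0]
      have hPW : (0:ℝ) ≤ (1 + X) ^ (s + 1) * inorm w := by positivity
      have hc1 := mul_le_mul_of_nonneg_right h1 hW0
      have hc2 := mul_le_mul_of_nonneg_right h2 (mul_nonneg (mul_nonneg (by linarith : (0:ℝ) ≤ Ks) he0) hW0)
      have hc3 := mul_le_mul_of_nonneg_right h3 hPW
      have hQ := Q t
      rw [hE, ← hX] at hQ
      nlinarith [hQ, hc1, hc2, hc3]

end Poly


/-- **Lemma (estimate for small `l`, `s(m) ≥ 3`).** Let `⟨a,b⟩` be an unlocked parabolic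
affine action with `a` step-2. For any `ξ > 0` there is `c = c(A,B,ξ) > 0` such that for
any `m ∈ 𝒞₃` with `s(m) ≥ 3` which is lowest on its `Ā`-orbit, for any `k ∈ ℤ` and any
`l` with `|l| < (ξ|m|)^{δ(m)}`, one has `|Ā^k B̄^l m| ≥ c |m|^{δ(m)}`, where
`δ(m) = 0.99/s(m)`. -/
theorem small_l_bound (d : ℕ) (A B : Mat d) (α β : Vec d)
    (hA2 : IsStep2 A) (hBpar : IsParabolic B)
    (hcomm : A * B = B * A) (hTAB : TAB A B α β)
    (hunlocked : ¬ IsLocked A B)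
    (ξ : ℝ) (hξ : 0 < ξ) :
    ∃ c : ℝ, 0 < c ∧
      ∀ (m : IVec d) (s : ℕ), InC3 A B m → 3 ≤ s → stepOf B m s →
        LowestOnOrbit A m →
        ∀ k l : ℤ, |(l : ℝ)| < (ξ * inorm m) ^ (0.99 / (s : ℝ)) →
          c * inorm m ^ (0.99 / (s : ℝ)) ≤
            inorm ((zpowM (dual A) k * zpowM (dual B) l).mulVec m) := by
  classical
  obtain ⟨S, hS⟩ := hBpar
  have hcN0 : 0 ≤ eopNorm (hat B) := eopNorm_nonneg _
  have hΞ1 : (1:ℝ) ≤ max 1 ξ := le_max_left 1 ξ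
  have hξΞ : ξ ≤ max 1 ξ := le_max_right 1 ξ
  have hDpos : (0:ℝ) < (1 + eopNorm (hat B)) ^ S * (2 * max 1 ξ) ^ S :=
    mul_pos (pow_pos (by linarith) S) (pow_pos (by linarith) S)
  refine ⟨((1 + eopNorm (hat B)) ^ S * (2 * max 1 ξ) ^ S)⁻¹, inv_pos.mpr hDpos, ?_⟩
  intro m s hm hs3 hstep hlow k l hl
  -- ### Unit structure on the dual matrices ###
  have hXA : (A.transpose - 1) ^ 2 = 0 := by
    have h := congrArg Matrix.transpose hA2.1
    rwa [Matrix.transpose_pow, Matrix.transpose_sub, Matrix.transpose_one,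
      Matrix.transpose_zero] at h
  have eA1 : A.transpose * (2 - A.transpose) = 1 := by
    have ee : A.transpose * (2 - A.transpose) = 1 - (A.transpose - 1) ^ 2 := by noncomm_ring
    rw [ee, hXA, sub_zero]
  have eA2 : (2 - A.transpose) * A.transpose = 1 := by
    have ee : (2 - A.transpose) * A.transpose = 1 - (A.transpose - 1) ^ 2 := by noncomm_ring
    rw [ee, hXA, sub_zero]
  set uAT : (Mat d)ˣ := ⟨A.transpose, 2 - A.transpose, eA1, eA2⟩ with huATdef
  set uA : (Mat d)ˣ := uAT⁻¹ with huAdef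
  have hUA : (uA : Mat d) = dual A := by
    have h1 : (uA : Mat d) = (↑uAT : Mat d)⁻¹ := Matrix.coe_units_inv uAT
    rw [h1]
    rfl
  have hNBpow : ((1 : Mat d) - B.transpose) ^ S = 0 := by
    have h := congrArg Matrix.transpose hS
    rw [Matrix.transpose_pow, Matrix.transpose_sub, Matrix.transpose_one,
      Matrix.transpose_zero] at h
    calc ((1 : Mat d) - B.transpose) ^ S = (-(B.transpose - 1)) ^ S := by rw [neg_sub]
      _ = (-1) ^ S * (B.transpose - 1) ^ S := by rw [neg_pow]
      _ = 0 := by rw [h, mul_zero]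
  have geom1 : B.transpose * (∑ i ∈ Finset.range S, ((1 : Mat d) - B.transpose) ^ i) = 1 := by
    have hmg := mul_geom_sum ((1 : Mat d) - B.transpose) S
    rw [hNBpow, sub_sub_cancel_left, zero_sub, neg_mul] at hmg
    exact neg_injective hmg
  have geom2 : (∑ i ∈ Finset.range S, ((1 : Mat d) - B.transpose) ^ i) * B.transpose = 1 := by
    have hmg := geom_sum_mul ((1 : Mat d) - B.transpose) S
    rw [hNBpow, sub_sub_cancel_left, zero_sub, mul_neg] at hmg
    exact neg_injective hmg
  set uBT : (Mat d)ˣ :=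
    ⟨B.transpose, ∑ i ∈ Finset.range S, ((1 : Mat d) - B.transpose) ^ i, geom1, geom2⟩
    with huBTdef
  set uB : (Mat d)ˣ := uBT⁻¹ with huBdef
  have hUB : (uB : Mat d) = dual B := by
    have h1 : (uB : Mat d) = (↑uBT : Mat d)⁻¹ := Matrix.coe_units_inv uBT
    rw [h1]
    rfl
  -- ### hat identities ###
  have hdualA : dual A = 2 - A.transpose := by
    show A.transpose⁻¹ = _
    exact Matrix.inv_eq_right_inv eA1
  have h2one : (2 : Mat d) = 1 + 1 := one_add_one_eq_two.symm
  have hhatA : hat A = 1 - A.transpose := by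
    unfold hat
    rw [hdualA, h2one]
    abel
  have hhatA2 : hat A * hat A = 0 := by
    rw [hhatA]
    have ee : ((1 : Mat d) - A.transpose) * (1 - A.transpose) = (A.transpose - 1) ^ 2 := by
      noncomm_ring
    rw [ee, hXA]
  have hdualA1 : dual A = 1 + hat A := by
    unfold hat
    abel
  have zpowA : ∀ j : ℤ, zpowM (dual A) j = 1 + j • hat A := fun j => by
    rw [hdualA1]
    exact zpowM_one_add_nilsq (hat A) hhatA2 j
  -- ### commutation ###
  have hcT : A.transpose * B.transpose = B.transpose * A.transpose := by
    have h := congrArg Matrix.transpose hcomm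
    rw [Matrix.transpose_mul, Matrix.transpose_mul] at h
    exact h.symm
  have hcUT : Commute uAT uBT := by
    apply Units.ext
    rw [Units.val_mul, Units.val_mul]
    exact hcT
  have hcU : Commute uA uB := (hcUT.inv_left).inv_right
  have hzA : zpowM (dual A) k = (↑(uA ^ k) : Mat d) := by rw [← hUA, zpowM_units]
  have hzB : ∀ t : ℤ, zpowM (dual B) t = (↑(uB ^ t) : Mat d) := fun t => by
    rw [← hUB, zpowM_units]
  have hkey : uB ^ (-l) * (uA ^ k * uB ^ l) = uA ^ k := by
    have hc : uA ^ k * uB ^ l = uB ^ l * uA ^ k := (hcU.zpow_zpow k l).eq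
    rw [hc, zpow_neg, inv_mul_cancel_left]
  have hid : (zpowM (dual B) (-l)).mulVec
      ((zpowM (dual A) k * zpowM (dual B) l).mulVec m) = m + k • (hat A).mulVec m := by
    rw [hzA, hzB l, hzB (-l), ← Units.val_mul, Matrix.mulVec_mulVec, ← Units.val_mul, hkey,
      ← hzA, zpowA, Matrix.add_mulVec, Matrix.one_mulVec, Matrix.smul_mulVec]
  have hlow' : inorm m ≤ inorm ((zpowM (dual B) (-l)).mulVec
      ((zpowM (dual A) k * zpowM (dual B) l).mulVec m)) := by
    rw [hid]
    exact hlow k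
  -- ### step bound s ≤ S and step of the image vector ###
  have hBmul1 : (uB : Mat d) * B.transpose = 1 := by
    have h := congrArg Units.val (inv_mul_cancel uBT)
    rw [Units.val_mul] at h
    exact h
  have hBmul2 : B.transpose * (uB : Mat d) = 1 := by
    have h := congrArg Units.val (mul_inv_cancel uBT)
    rw [Units.val_mul] at h
    exact h
  have hhatB_eq : hat B = (uB : Mat d) * ((1 : Mat d) - B.transpose) := by
    unfold hat
    rw [← hUB, mul_sub, mul_one, hBmul1]
  have hcommBN : Commute ((uB : Mat d)) ((1 : Mat d) - B.transpose) :=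
    Commute.sub_right (Commute.one_right _) (by unfold Commute SemiconjBy; rw [hBmul1, hBmul2])
  have hhatBS : (hat B) ^ S = 0 := by
    rw [hhatB_eq, hcommBN.mul_pow, hNBpow, mul_zero]
  have hsS : s ≤ S := hstep.2 S (by rw [hhatBS, Matrix.zero_mulVec])
  have hcUBG : Commute uB (uA ^ k * uB ^ l) :=
    Commute.mul_right ((hcU.symm).zpow_right k) ((Commute.refl uB).zpow_right l)
  have hcHat : Commute (hat B) (↑(uA ^ k * uB ^ l) : Mat d) := by
    have h : Commute ((uB : Mat d)) (↑(uA ^ k * uB ^ l) : Mat d) := by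
      have hh := congrArg Units.val hcUBG
      rw [Units.val_mul, Units.val_mul] at hh
      exact hh
    have h1 : hat B = (uB : Mat d) - 1 := by unfold hat; rw [hUB]
    rw [h1]
    exact h.sub_left (Commute.one_left _)
  have hstepn : ((hat B) ^ s).mulVec
      ((zpowM (dual A) k * zpowM (dual B) l).mulVec m) = 0 := by
    rw [hzA, hzB l, ← Units.val_mul, Matrix.mulVec_mulVec, (hcHat.pow_left s).eq,
      ← Matrix.mulVec_mulVec, hstep.1, Matrix.mulVec_zero]
  obtain ⟨s', rfl⟩ : ∃ s', s = s' + 1 := ⟨s - 1, by omega⟩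
  -- ### polynomial growth bound ###
  have huB1 : (uB : Mat d) = 1 + hat B := by
    rw [hUB]
    unfold hat
    abel
  have hpoly := poly_growth uB (hat B) huB1 s'
    ((zpowM (dual A) k * zpowM (dual B) l).mulVec m) hstepn (-l)
  have habs : |((-l : ℤ) : ℝ)| = |(l : ℝ)| := by push_cast; rw [abs_neg]
  rw [habs] at hpoly
  rw [hzB (-l)] at hlow'
  rw [hzB (-l)] at hid
  have hmain : inorm m ≤ (1 + eopNorm (hat B)) ^ (s' + 1) * (1 + |(l : ℝ)|) ^ s' *
      inorm ((zpowM (dual A) k * zpowM (dual B) l).mulVec m) :=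
    le_trans hlow' hpoly
  -- ### numerics ###
  set μ := inorm m with hμdef
  set nv := inorm ((zpowM (dual A) k * zpowM (dual B) l).mulVec m) with hnvdef
  set δ := 0.99 / ((s' + 1 : ℕ) : ℝ) with hδdef
  have hμ1 : 1 ≤ μ := one_le_inorm hm.1
  have hμ0 : (0:ℝ) < μ := lt_of_lt_of_le one_pos hμ1
  have hnv0 : 0 ≤ nv := inorm_nonneg _
  have hsR : ((s' + 1 : ℕ) : ℝ) = (s' : ℝ) + 1 := by push_cast; ring
  have hs3' : (3:ℝ) ≤ (s' : ℝ) + 1 := by exact_mod_cast hs3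
  have hδpos : 0 < δ := by
    rw [hδdef, hsR]
    exact div_pos (by norm_num) (by linarith)
  have hδ1 : δ ≤ 1 := by
    rw [hδdef, hsR, div_le_one (by linarith)]
    linarith
  have hμδ1 : 1 ≤ μ ^ δ := by
    calc (1:ℝ) = μ ^ (0:ℝ) := (Real.rpow_zero μ).symm
      _ ≤ μ ^ δ := Real.rpow_le_rpow_of_exponent_le hμ1 hδpos.le
  have hξδ : ξ ^ δ ≤ max 1 ξ := by
    rcases le_total ξ 1 with h | h
    · exact le_trans (Real.rpow_le_one hξ.le h hδpos.le) hΞ1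
    · calc ξ ^ δ ≤ ξ ^ (1:ℝ) := Real.rpow_le_rpow_of_exponent_le h hδ1
        _ = ξ := Real.rpow_one ξ
        _ ≤ max 1 ξ := hξΞ
  have hl2 : |(l : ℝ)| ≤ max 1 ξ * μ ^ δ := by
    refine le_trans hl.le ?_
    rw [Real.mul_rpow hξ.le hμ0.le]
    exact mul_le_mul_of_nonneg_right hξδ (Real.rpow_nonneg hμ0.le δ)
  have hΞμ : 1 ≤ max 1 ξ * μ ^ δ := by
    have h := mul_le_mul_of_nonneg_left hμδ1 (le_trans zero_le_one hΞ1)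
    rw [mul_one] at h
    exact le_trans hΞ1 h
  have hT : 1 + |(l : ℝ)| ≤ 2 * max 1 ξ * μ ^ δ := by nlinarith [hl2, hΞμ]
  have hne : ((s' : ℝ) + 1) ≠ 0 := by linarith
  have hTpow : (1 + |(l : ℝ)|) ^ s' ≤ (2 * max 1 ξ) ^ s' * μ ^ (0.99 - δ) := by
    have h1 : (1 + |(l : ℝ)|) ^ s' ≤ (2 * max 1 ξ * μ ^ δ) ^ s' :=
      pow_le_pow_left₀ (by positivity) hT s'
    rw [mul_pow] at h1
    refine le_trans h1 (le_of_eq ?_)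
    congr 1
    rw [← Real.rpow_natCast (μ ^ δ) s', ← Real.rpow_mul hμ0.le]
    congr 1
    rw [hδdef, hsR]
    field_simp
    ring
  have hK1 : (1 + eopNorm (hat B)) ^ (s' + 1) ≤ (1 + eopNorm (hat B)) ^ S :=
    pow_le_pow_right₀ (by linarith) hsS
  have h2Ξ : (2 * max 1 ξ) ^ s' ≤ (2 * max 1 ξ) ^ S :=
    pow_le_pow_right₀ (by linarith) (by omega)
  have hrw0 : 0 ≤ μ ^ (0.99 - δ) := Real.rpow_nonneg hμ0.le _
  have hchain : μ ≤ (1 + eopNorm (hat B)) ^ S * (2 * max 1 ξ) ^ S * μ ^ (0.99 - δ) * nv := by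
    have c1 : (1 + eopNorm (hat B)) ^ (s' + 1) * (1 + |(l : ℝ)|) ^ s' * nv
        ≤ (1 + eopNorm (hat B)) ^ S * ((2 * max 1 ξ) ^ S * μ ^ (0.99 - δ)) * nv := by
      refine mul_le_mul_of_nonneg_right ?_ hnv0
      refine mul_le_mul hK1 ?_ (by positivity) (pow_nonneg (by linarith) S)
      exact le_trans hTpow (mul_le_mul_of_nonneg_right h2Ξ hrw0)
    calc μ ≤ _ := hmain
      _ ≤ _ := c1
      _ = (1 + eopNorm (hat B)) ^ S * (2 * max 1 ξ) ^ S * μ ^ (0.99 - δ) * nv := by ring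
  have hfinal : μ ^ δ ≤ (1 + eopNorm (hat B)) ^ S * (2 * max 1 ξ) ^ S * nv := by
    have hmul := mul_le_mul_of_nonneg_right hchain (Real.rpow_nonneg hμ0.le (δ - 0.99))
    have e1 : μ * μ ^ (δ - 0.99) = μ ^ (1 + (δ - 0.99)) := by
      rw [Real.rpow_add hμ0, Real.rpow_one]
    have e2 : (1 + eopNorm (hat B)) ^ S * (2 * max 1 ξ) ^ S * μ ^ (0.99 - δ) * nv
        * μ ^ (δ - 0.99) = (1 + eopNorm (hat B)) ^ S * (2 * max 1 ξ) ^ S * nv := by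
      have e3 : μ ^ (0.99 - δ) * μ ^ (δ - 0.99) = 1 := by
        rw [← Real.rpow_add hμ0, show (0.99 - δ) + (δ - 0.99) = 0 by ring, Real.rpow_zero]
      calc (1 + eopNorm (hat B)) ^ S * (2 * max 1 ξ) ^ S * μ ^ (0.99 - δ) * nv
            * μ ^ (δ - 0.99)
          = (1 + eopNorm (hat B)) ^ S * (2 * max 1 ξ) ^ S * nv
            * (μ ^ (0.99 - δ) * μ ^ (δ - 0.99)) := by ring
        _ = _ := by rw [e3, mul_one]
    rw [e1, e2] at hmul
    calc μ ^ δ ≤ μ ^ (1 + (δ - 0.99)) :=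
          Real.rpow_le_rpow_of_exponent_le hμ1 (by linarith)
      _ ≤ _ := hmul
  have hres := mul_le_mul_of_nonneg_left hfinal (inv_nonneg.mpr hDpos.le)
  rw [← mul_assoc, inv_mul_cancel₀ (ne_of_gt hDpos), one_mul] at hres
  exact hres


end ParabolicKAM
end
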